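/- arXiv:2410.15024 — 7 statements merged into one kernel-verified Lean document; each statement's English description precedes it below -/
import Mathlib

section
/- Let n ≥ 3 with n ≠ 5, let C = x_0, x_1, …, x_{n−1}, x_0 be a cycle of length n, and let a, b, c be three pairwise distinct colors. If the three edges x_0x_1, x_1x_2, x_2x_3 are pre-colored a, b, c respectively, then this partial edge coloring can be extended to a 3-star edge coloring of C using only the colors {a, b, c}. -/
/-!
Read the edge colors of the cycle as a cyclic word starting at the edge `x₀x₁`. The words
`abc` and `abcb` are cyclic 3-star colorings, and two cyclic star words that begin with `abc`
can be concatenated: every window of four consecutive edges meets at most one junction, and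
across a junction it reads the same letters as across the wrap-around of one of the factors.
Every `n ≥ 3` except `5` is a sum of 3s and 4s, which gives a coloring of `C_n` starting with
`abc`.
-/

/-- A 3-star edge coloring of the cycle `x_0, x_1, …, x_{n-1}, x_0`, where the edge
`x_i x_{i+1}` (indices mod `n`) receives color `g i`: the coloring is proper
(adjacent edges get distinct colors) and no path or cycle with four edges is bicolored
(for a proper coloring this means no four consecutive edges are colored `a b a b`). -/
def IsStarEdgeColoringCycle {α : Type*} (n : ℕ) (g : ZMod n → α) : Prop :=
  (∀ i, g i ≠ g (i + 1)) ∧ ∀ i, ¬ (g i = g (i + 2) ∧ g (i + 1) = g (i + 3))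

section

variable {α : Type*}

def IsStarWindow (w₀ w₁ w₂ w₃ : α) : Prop :=
  w₀ ≠ w₁ ∧ w₁ ≠ w₂ ∧ w₂ ≠ w₃ ∧ ¬(w₀ = w₂ ∧ w₁ = w₃)

def IsStarWord : List α → Prop
  | w₀ :: w₁ :: w₂ :: w₃ :: l => IsStarWindow w₀ w₁ w₂ w₃ ∧ IsStarWord (w₁ :: w₂ :: w₃ :: l)
  | _ => True

namespace IsStarWord

lemma tail {w : α} {l : List α} (h : IsStarWord (w :: l)) : IsStarWord l := by
  match l, h with
  | _ :: _ :: _ :: _, h => exact h.2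
  | [], _ | [_], _ | [_, _], _ => trivial

lemma isStarWindow {l : List α} (h : IsStarWord l) {i : ℕ} (hi : i + 3 < l.length) :
    IsStarWindow l[i] l[i + 1] l[i + 2] l[i + 3] := by
  induction i generalizing l with
  | zero => match l, h with | _ :: _ :: _ :: _ :: _, h => exact h.1
  | succ i ih =>
    match l, h with
    | _ :: l, h => simpa using ih h.tail (by simp at hi; omega)

lemma append_of_overlap {x t y : List α} (hxt : IsStarWord (x ++ t)) (hty : IsStarWord (t ++ y))
    (ht : 3 ≤ t.length) : IsStarWord (x ++ t ++ y) := by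
  induction x with
  | nil => simpa using hty
  | cons w x ih =>
    obtain ⟨u₁, u₂, u₃, r, hr⟩ : ∃ u₁ u₂ u₃ r, x ++ t = u₁ :: u₂ :: u₃ :: r := by
      have hl : 3 ≤ (x ++ t).length := by simp; omega
      rcases h : x ++ t with _ | ⟨u₁, _ | ⟨u₂, _ | ⟨u₃, r⟩⟩⟩ <;> simp [h] at hl
      exact ⟨_, _, _, _, rfl⟩
    have hx : IsStarWord (x ++ t ++ y) := ih hxt.tail
    rw [List.cons_append, hr] at hxt
    rw [hr] at hx
    rw [List.cons_append, List.cons_append, hr]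
    exact ⟨hxt.1, hx⟩

end IsStarWord

/-- Appending the first three letters turns every window of four consecutive edges of the
cycle into a window of a linear word. -/
def IsCyclicStarWord (W : List α) : Prop := IsStarWord (W ++ W.take 3)

lemma IsCyclicStarWord.append {u v : List α} (hu : IsCyclicStarWord u) (hv : IsCyclicStarWord v)
    (hlen : 3 ≤ u.length) (htake : u.take 3 = v.take 3) : IsCyclicStarWord (u ++ v) := by
  have h := hu.append_of_overlap (y := v.drop 3 ++ u.take 3)
    (by rw [htake, ← List.append_assoc, List.take_append_drop]; exact hv) (by simp; omega)
  have hv' : v = u.take 3 ++ v.drop 3 := by rw [htake, List.take_append_drop]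
  unfold IsCyclicStarWord
  rw [List.take_append_of_le_length hlen, hv']
  simpa using h

lemma getElem_append_take_three {W : List α} (hW : 3 ≤ W.length) {r : ℕ}
    (hr : r < W.length + 3) :
    (W ++ W.take 3)[r]'(by simp; omega) = W[r % W.length]'(Nat.mod_lt _ (by omega)) := by
  rcases lt_or_ge r W.length with h | h
  · simp [List.getElem_append_left h, Nat.mod_eq_of_lt h]
  · rw [List.getElem_append_right h, List.getElem_take]
    congr 1
    rw [Nat.mod_eq_sub_mod h, Nat.mod_eq_of_lt (by omega)]

def cycleColoring (W : List α) [NeZero W.length] (i : ZMod W.length) : α :=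
  W[i.val]'(ZMod.val_lt i)

lemma cycleColoring_mem (W : List α) [NeZero W.length] (i : ZMod W.length) :
    cycleColoring W i ∈ W :=
  List.getElem_mem _

lemma IsCyclicStarWord.isStarEdgeColoringCycle {W : List α} (hW : IsCyclicStarWord W)
    (hlen : 3 ≤ W.length) [NeZero W.length] :
    IsStarEdgeColoringCycle W.length (cycleColoring W) := by
  have shift (i : ZMod W.length) (k : ℕ) (hk : k ≤ 3) :
      cycleColoring W (i + k) = (W ++ W.take 3)[i.val + k]'(by
        have := ZMod.val_lt i; simp; omega) := by
    have := ZMod.val_lt i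
    rw [getElem_append_take_three hlen (by omega)]
    simp only [cycleColoring, ZMod.val_add, ZMod.val_natCast, Nat.add_mod_mod]
  have window (i : ZMod W.length) : IsStarWindow (cycleColoring W i) (cycleColoring W (i + 1))
      (cycleColoring W (i + 2)) (cycleColoring W (i + 3)) := by
    have h0 := shift i 0 (by norm_num)
    have h1 := shift i 1 (by norm_num)
    have h2 := shift i 2 (by norm_num)
    have h3 := shift i 3 (by norm_num)
    simp only [Nat.cast_zero, add_zero, Nat.cast_one, Nat.cast_ofNat] at h0 h1 h2 h3
    rw [h0, h1, h2, h3]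
    exact hW.isStarWindow (by have := ZMod.val_lt i; simp; omega)
  exact ⟨fun i => (window i).1, fun i => (window i).2.2.2⟩

variable {a b c : α}

lemma isCyclicStarWord_abc (hab : a ≠ b) (hac : a ≠ c) (hbc : b ≠ c) :
    IsCyclicStarWord [a, b, c] := by
  simp [IsCyclicStarWord, IsStarWord, IsStarWindow, hab, hac, hbc, hab.symm, hac.symm, hbc.symm]

lemma isCyclicStarWord_abcb (hab : a ≠ b) (hac : a ≠ c) (hbc : b ≠ c) :
    IsCyclicStarWord [a, b, c, b] := by
  simp [IsCyclicStarWord, IsStarWord, IsStarWindow, hab, hac, hbc, hab.symm, hac.symm, hbc.symm]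

lemma exists_isCyclicStarWord (hab : a ≠ b) (hac : a ≠ c) (hbc : b ≠ c) (n : ℕ) (hn : 3 ≤ n)
    (hn5 : n ≠ 5) :
    ∃ W : List α, W.length = n ∧ [a, b, c] <+: W ∧ W ⊆ [a, b, c] ∧ IsCyclicStarWord W := by
  induction n using Nat.strong_induction_on with
  | _ n ih =>
  obtain rfl | rfl | rfl | ⟨h6, h8⟩ : n = 3 ∨ n = 4 ∨ n = 8 ∨ 6 ≤ n ∧ n ≠ 8 := by omega
  · exact ⟨_, rfl, List.prefix_rfl, List.Subset.refl _, isCyclicStarWord_abc hab hac hbc⟩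
  · exact ⟨_, rfl, ⟨[b], rfl⟩, by simp, isCyclicStarWord_abcb hab hac hbc⟩
  · have h := isCyclicStarWord_abcb hab hac hbc
    exact ⟨_, rfl, ⟨[b, a, b, c, b], rfl⟩, by simp, h.append h (by simp) rfl⟩
  · obtain ⟨W, hlen, hpre, hsub, hW⟩ := ih (n - 3) (by omega) (by omega) (by omega)
    refine ⟨[a, b, c] ++ W, by simp; omega, List.prefix_append _ _,
      List.append_subset.2 ⟨List.Subset.refl _, hsub⟩, ?_⟩
    exact (isCyclicStarWord_abc hab hac hbc).append hW (by simp) (List.prefix_iff_eq_take.1 hpre)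

end

theorem stmt_0 {α : Type*} (n : ℕ) (hn : 3 ≤ n) (hn5 : n ≠ 5)
    (a b c : α) (hab : a ≠ b) (hac : a ≠ c) (hbc : b ≠ c) :
    ∃ g : ZMod n → α, (∀ i, g i ∈ ({a, b, c} : Set α)) ∧
      IsStarEdgeColoringCycle n g ∧ g 0 = a ∧ g 1 = b ∧ g 2 = c := by
  obtain ⟨W, rfl, ⟨W', rfl⟩, hsub, hW⟩ := exists_isCyclicStarWord hab hac hbc n hn hn5
  have : NeZero ([a, b, c] ++ W').length := ⟨by omega⟩
  refine ⟨cycleColoring _, fun i => by simpa using hsub (cycleColoring_mem _ i),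
    hW.isStarEdgeColoringCycle hn, ?_, ?_, ?_⟩
  all_goals simp [cycleColoring, ZMod.val_one_eq_one_mod, ZMod.val_ofNat, Nat.mod_eq_of_lt]
end

section
/- Let n ≥ 4 with n ≠ 5, let C = x_0, x_1, …, x_{n−1}, x_0 be a cycle of length n, and let a, b, c be three pairwise distinct colors. If the four edges x_0x_1, x_1x_2, x_2x_3, x_3x_4 are pre-colored a, b, c, b respectively, then this partial edge coloring can be extended to a 3-star edge coloring of C using only the colors {a, b, c}. -/
private def myf {α : Type*} (n : ℕ) (a b c : α) : ℕ → α := fun m =>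
  if m = 0 then a else if m = 1 then b
  else if n % 3 = 2 ∧ m = n - 1 then c
  else if m % 3 = 0 then b else if m % 3 = 1 then a else c

private lemma myf_zero {α : Type*} (n : ℕ) (a b c : α) : myf n a b c 0 = a := by
  simp [myf]

private lemma myf_one {α : Type*} (n : ℕ) (a b c : α) : myf n a b c 1 = b := by
  simp [myf]

private lemma myf_e0 {α : Type*} (n : ℕ) (a b c : α) (m : ℕ) (h : m % 3 = 0)
    (h0 : m ≠ 0) : myf n a b c m = b := by
  unfold myf; split_ifs <;> first | rfl | omega

private lemma myf_e1 {α : Type*} (n : ℕ) (a b c : α) (m : ℕ) (h : m % 3 = 1)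
    (h1 : m ≠ 1) (h2 : ¬(n % 3 = 2 ∧ m = n - 1)) : myf n a b c m = a := by
  unfold myf; split_ifs <;> first | rfl | omega

private lemma myf_e2 {α : Type*} (n : ℕ) (a b c : α) (m : ℕ) (h : m % 3 = 2) :
    myf n a b c m = c := by
  unfold myf; split_ifs <;> first | rfl | omega

private lemma myf_last {α : Type*} (n : ℕ) (a b c : α) (h : n % 3 = 2) (hn : 8 ≤ n) :
    myf n a b c (n - 1) = c := by
  unfold myf; split_ifs <;> first | rfl | omega

private lemma myf_mem {α : Type*} (n : ℕ) (a b c : α) (m : ℕ) :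
    myf n a b c m ∈ ({a, b, c} : Set α) := by
  unfold myf; split_ifs <;> simp


private lemma mod_eq_small (n k r : ℕ) (h : k = r) (hr : r < n) : k % n = r := by
  subst h; exact Nat.mod_eq_of_lt hr

private lemma mod_eq_wrap (n k r : ℕ) (h : k = n + r) (hr : r < n) : k % n = r := by
  subst h; rw [Nat.add_mod_left]; exact Nat.mod_eq_of_lt hr

private lemma myf_key {α : Type*} (n : ℕ) (hn : 4 ≤ n) (hn5 : n ≠ 5)
    (a b c : α) (hab : a ≠ b) (hac : a ≠ c) (hbc : b ≠ c) (m : ℕ) (hm : m < n) :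
    myf n a b c m ≠ myf n a b c ((m + 1) % n) ∧
    ¬(myf n a b c m = myf n a b c ((m + 2) % n) ∧
      myf n a b c ((m + 1) % n) = myf n a b c ((m + 3) % n)) := by
  have hba : b ≠ a := hab.symm
  have hca : c ≠ a := hac.symm
  have hcb : c ≠ b := hbc.symm
  have h3 : n % 3 = 0 ∨ n % 3 = 1 ∨ n % 3 = 2 := by omega
  rcases eq_or_ne m (n - 1) with h | hA
  · -- m = n - 1 : values (f(n-1), a, b, c)
    have i1 : (m + 1) % n = 0 := mod_eq_wrap n _ _ (by omega) (by omega)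
    have i2 : (m + 2) % n = 1 := mod_eq_wrap n _ _ (by omega) (by omega)
    have i3 : (m + 3) % n = 2 := mod_eq_wrap n _ _ (by omega) (by omega)
    rw [i1, i2, i3, myf_zero, myf_one, myf_e2 n a b c 2 rfl]
    rcases h3 with h3 | h3 | h3
    · rw [myf_e2 n a b c m (by omega)]
      exact ⟨hca, fun h => hcb h.1⟩
    · rw [myf_e0 n a b c m (by omega) (by omega)]
      exact ⟨hba, fun h => hac h.2⟩
    · rw [h, myf_last n a b c h3 (by omega)]
      exact ⟨hca, fun h => hcb h.1⟩
  rcases eq_or_ne m (n - 2) with h | hB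
  · -- m = n - 2 : values (f(n-2), f(n-1), a, b)
    have i2 : (m + 2) % n = 0 := mod_eq_wrap n _ _ (by omega) (by omega)
    have i3 : (m + 3) % n = 1 := mod_eq_wrap n _ _ (by omega) (by omega)
    have i1 : (m + 1) % n = n - 1 := mod_eq_small n _ _ (by omega) (by omega)
    rw [i1, i2, i3, myf_zero, myf_one]
    rcases h3 with h3 | h3 | h3
    · rw [myf_e1 n a b c m (by omega) (by omega) (by omega),
        myf_e2 n a b c (n - 1) (by omega)]
      exact ⟨hac, fun h => hcb h.2⟩
    · rw [myf_e2 n a b c m (by omega), myf_e0 n a b c (n - 1) (by omega) (by omega)]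
      exact ⟨hcb, fun h => hca h.1⟩
    · rw [myf_e0 n a b c m (by omega) (by omega), myf_last n a b c h3 (by omega)]
      exact ⟨hbc, fun h => hba h.1⟩
  rcases eq_or_ne m (n - 3) with h | hC
  · -- m = n - 3 : values (f(n-3), f(n-2), f(n-1), a)
    have i1 : (m + 1) % n = n - 2 := mod_eq_small n _ _ (by omega) (by omega)
    have i2 : (m + 2) % n = n - 1 := mod_eq_small n _ _ (by omega) (by omega)
    have i3 : (m + 3) % n = 0 := mod_eq_wrap n _ _ (by omega) (by omega)
    rw [i1, i2, i3, myf_zero]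
    rcases h3 with h3 | h3 | h3
    · -- n % 3 = 0, n ≥ 6 : b a c a
      rw [myf_e0 n a b c m (by omega) (by omega),
        myf_e1 n a b c (n - 2) (by omega) (by omega) (by omega),
        myf_e2 n a b c (n - 1) (by omega)]
      exact ⟨hba, fun h => hbc h.1⟩
    · rcases eq_or_ne n 4 with h4 | h4
      · -- n = 4, m = 1 : b c b a
        rw [h, h4]
        rw [show (4:ℕ) - 3 = 1 from rfl, show (4:ℕ) - 2 = 2 from rfl,
          show (4:ℕ) - 1 = 3 from rfl, myf_one, myf_e2 4 a b c 2 rfl,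
          myf_e0 4 a b c 3 rfl (by omega)]
        exact ⟨hbc, fun h => hca h.2⟩
      · -- n % 3 = 1, n ≥ 7 : a c b a
        rw [myf_e1 n a b c m (by omega) (by omega) (by omega),
          myf_e2 n a b c (n - 2) (by omega),
          myf_e0 n a b c (n - 1) (by omega) (by omega)]
        exact ⟨hac, fun h => hab h.1⟩
    · -- n % 3 = 2, n ≥ 8 : c b c a
      rw [myf_e2 n a b c m (by omega),
        myf_e0 n a b c (n - 2) (by omega) (by omega),
        myf_last n a b c h3 (by omega)]
      exact ⟨hcb, fun h => hba h.2⟩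
  -- now m ≤ n - 4, so m, m+1, m+2 ≤ n - 2 and no wrap for them
  have i1 : (m + 1) % n = m + 1 := mod_eq_small n _ _ rfl (by omega)
  have i2 : (m + 2) % n = m + 2 := mod_eq_small n _ _ rfl (by omega)
  rw [i1, i2]
  rcases eq_or_ne m 0 with h | h0
  · -- values a b c
    subst h
    rw [myf_zero, myf_one, myf_e2 n a b c 2 rfl]
    exact ⟨hab, fun h => hac h.1⟩
  rcases eq_or_ne m 1 with h | h1
  · -- values b c b, and f((1+3)%n) = a in all cases
    subst h
    have hv3 : myf n a b c ((1 + 3) % n) = a := by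
      rcases eq_or_ne n 4 with h4 | h4
      · rw [h4]; exact myf_zero 4 a b c
      · have : (1 + 3) % n = 4 := mod_eq_small n _ _ rfl (by omega)
        rw [this]; exact myf_e1 n a b c 4 rfl (by omega) (by omega)
    rw [hv3, myf_one, myf_e2 n a b c 2 rfl, myf_e0 n a b c 3 rfl (by omega)]
    exact ⟨hbc, fun h => hca h.2⟩
  rcases eq_or_ne m 2 with h | h2
  · -- values c b a
    subst h
    rw [myf_e2 n a b c 2 rfl, myf_e0 n a b c 3 rfl (by omega),
      myf_e1 n a b c 4 rfl (by omega) (by omega)]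
    exact ⟨hcb, fun h => hca h.1⟩
  -- middle: 3 ≤ m ≤ n - 4
  have hm3 : m % 3 = 0 ∨ m % 3 = 1 ∨ m % 3 = 2 := by omega
  rcases hm3 with hr | hr | hr
  · -- b a c
    rw [myf_e0 n a b c m hr h0,
      myf_e1 n a b c (m + 1) (by omega) (by omega) (by omega),
      myf_e2 n a b c (m + 2) (by omega)]
    exact ⟨hba, fun h => hbc h.1⟩
  · -- a c b
    rw [myf_e1 n a b c m hr h1 (by omega),
      myf_e2 n a b c (m + 1) (by omega),
      myf_e0 n a b c (m + 2) (by omega) (by omega)]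
    exact ⟨hac, fun h => hab h.1⟩
  · -- c b a
    rw [myf_e2 n a b c m hr,
      myf_e0 n a b c (m + 1) (by omega) (by omega),
      myf_e1 n a b c (m + 2) (by omega) (by omega) (by omega)]
    exact ⟨hcb, fun h => hca h.1⟩

theorem stmt_1 {α : Type*} (n : ℕ) (hn : 4 ≤ n) (hn5 : n ≠ 5)
    (a b c : α) (hab : a ≠ b) (hac : a ≠ c) (hbc : b ≠ c) :
    ∃ g : ZMod n → α, (∀ i, g i ∈ ({a, b, c} : Set α)) ∧
      IsStarEdgeColoringCycle n g ∧ g 0 = a ∧ g 1 = b ∧ g 2 = c ∧ g 3 = b := by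
  haveI : NeZero n := ⟨by omega⟩
  refine ⟨fun i => myf n a b c i.val, fun i => myf_mem n a b c i.val, ?_, ?_, ?_, ?_, ?_⟩
  · have v1 : ∀ i : ZMod n, (i + 1).val = (i.val + 1) % n := by
      intro i
      rw [show (1 : ZMod n) = ((1 : ℕ) : ZMod n) by norm_cast, ZMod.val_add,
        ZMod.val_cast_of_lt (by omega)]
    have v2 : ∀ i : ZMod n, (i + 2).val = (i.val + 2) % n := by
      intro i
      rw [show (2 : ZMod n) = ((2 : ℕ) : ZMod n) by norm_cast, ZMod.val_add,
        ZMod.val_cast_of_lt (by omega)]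
    have v3 : ∀ i : ZMod n, (i + 3).val = (i.val + 3) % n := by
      intro i
      rw [show (3 : ZMod n) = ((3 : ℕ) : ZMod n) by norm_cast, ZMod.val_add,
        ZMod.val_cast_of_lt (by omega)]
    constructor
    · intro i
      simp only [v1]
      exact (myf_key n hn hn5 a b c hab hac hbc i.val (ZMod.val_lt i)).1
    · intro i
      simp only [v1, v2, v3]
      exact (myf_key n hn hn5 a b c hab hac hbc i.val (ZMod.val_lt i)).2
  · show myf n a b c (0 : ZMod n).val = a
    rw [show ((0 : ZMod n)).val = 0 from ZMod.val_zero]; exact myf_zero n a b c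
  · show myf n a b c (1 : ZMod n).val = b
    rw [show ((1 : ZMod n)).val = 1 by
      rw [show (1 : ZMod n) = ((1 : ℕ) : ZMod n) by norm_cast,
        ZMod.val_cast_of_lt (by omega)]]
    exact myf_one n a b c
  · show myf n a b c (2 : ZMod n).val = c
    rw [show ((2 : ZMod n)).val = 2 by
      rw [show (2 : ZMod n) = ((2 : ℕ) : ZMod n) by norm_cast,
        ZMod.val_cast_of_lt (by omega)]]
    exact myf_e2 n a b c 2 rfl
  · show myf n a b c (3 : ZMod n).val = b
    rw [show ((3 : ZMod n)).val = 3 by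
      rw [show (3 : ZMod n) = ((3 : ℕ) : ZMod n) by norm_cast,
        ZMod.val_cast_of_lt (by omega)]]
    exact myf_e0 n a b c 3 rfl (by omega)
end

section
/- Let n ≥ 6, let C = x_0, x_1, …, x_{n−1}, x_0 be a cycle of length n, and let a, b, c be three pairwise distinct colors. If the five edges x_0x_1, x_1x_2, x_2x_3, x_3x_4, x_4x_5 are pre-colored a, b, c, b, a respectively, then this partial edge coloring can be extended to a 3-star edge coloring of C using only the colors {a, b, c}. -/
open Finset Function

theorem IsStarEdgeColoringCycle.comp {α β : Type*} {n : ℕ} {g : ZMod n → α}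
    (hg : IsStarEdgeColoringCycle n g) {e : α → β} (he : Injective e) :
    IsStarEdgeColoringCycle n (e ∘ g) :=
  ⟨fun i h => hg.1 i (he h), fun i h => hg.2 i ⟨he h.1, he h.2⟩⟩

theorem isStarEdgeColoringCycle_of_steps {G : Type*} [AddGroup G] {n : ℕ} (h σ : ZMod n → G)
    (hstep : ∀ i, h (i + 1) = h i + σ i) (hσ : ∀ i, σ i ≠ 0)
    (hpair : ∀ i, σ i + σ (i + 1) = 0 → σ (i + 1) + σ (i + 2) ≠ 0) :
    IsStarEdgeColoringCycle n h := by
  have two_steps : ∀ i, h (i + 2) = h i + (σ i + σ (i + 1)) := fun i => by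
    rw [← one_add_one_eq_two, ← add_assoc, hstep, hstep, add_assoc]
  refine ⟨fun i heq => hσ i ?_, fun i ⟨h02, h13⟩ => hpair i ?_ ?_⟩
  · rwa [hstep, left_eq_add] at heq
  · rwa [two_steps, left_eq_add] at h02
  · rwa [show i + 3 = i + 1 + 2 by ring, two_steps, left_eq_add, add_assoc, one_add_one_eq_two]
      at h13

def NoSingletonRun {n : ℕ} (p : ZMod n → Prop) : Prop :=
  ∀ i, (p i ↔ p (i + 1)) ∨ (p (i + 1) ↔ p (i + 2))

theorem isStarEdgeColoringCycle_of_signs {n : ℕ} (h : ZMod n → ZMod 3) (p : ZMod n → Prop)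
    [DecidablePred p] (hstep : ∀ i, h (i + 1) = h i + if p i then 1 else -1)
    (hruns : NoSingletonRun p) :
    IsStarEdgeColoringCycle n h := by
  have sign_add_sign : ∀ i j, ((if p i then 1 else -1) + (if p j then 1 else -1) : ZMod 3) = 0 ↔
      ¬ (p i ↔ p j) := fun i j => by
    by_cases hi : p i <;> by_cases hj : p j <;> simp only [hi, hj, if_true, if_false] <;> decide
  refine isStarEdgeColoringCycle_of_steps h _ hstep (fun i => ?_) fun i h01 h12 => ?_
  · split_ifs <;> decide
  · rw [sign_add_sign] at h01 h12
    exact (hruns i).elim h01 h12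

theorem noSingletonRun_two_runs {n m : ℕ} (hm : 4 ≤ m) (hmn : m ≤ n) :
    NoSingletonRun fun i : ZMod n => i.val < 2 ∨ m ≤ i.val := by
  have : NeZero n := ⟨by omega⟩
  intro i
  have hi := i.val_lt
  have h1 : (i + 1).val = (i.val + 1) % n := by rw [ZMod.val_add, ZMod.val_one'' (by omega)]
  have h2 : (i + 2).val = (i.val + 2) % n := by
    rw [ZMod.val_add, ZMod.val_ofNat_of_lt (show 2 < n by omega)]
  dsimp only
  rw [h1, h2, Nat.add_mod_eq_ite, Nat.add_mod_eq_ite, Nat.mod_eq_of_lt hi,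
    Nat.mod_eq_of_lt (by omega : 1 < n), Nat.mod_eq_of_lt (by omega : 2 < n)]
  split_ifs <;> omega

theorem ZMod.exists_add_steps_of_sum_eq_zero {G : Type*} [AddCommGroup G] {n : ℕ} [NeZero n]
    (σ : ℕ → G) (hσ : ∑ k ∈ range n, σ k = 0) :
    ∃ h : ZMod n → G, h 0 = 0 ∧ ∀ i, h (i + 1) = h i + σ i.val := by
  refine ⟨fun i => ∑ k ∈ range i.val, σ k, by simp, fun i => ?_⟩
  have hval : (i + 1).val = (i.val + 1) % n := by
    rw [← ZMod.natCast_zmod_val i, ← Nat.cast_succ, ZMod.val_natCast, ZMod.val_natCast,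
      Nat.mod_eq_of_lt i.val_lt]
  simp only [hval, ← sum_range_succ]
  rcases Nat.lt_or_ge (i.val + 1) n with hlt | hge
  · rw [Nat.mod_eq_of_lt hlt]
  · rw [show i.val + 1 = n by have := i.val_lt; omega, Nat.mod_self, range_zero, sum_empty, hσ]

theorem sum_range_sign_two_runs (n m : ℕ) (hm : 2 ≤ m) (hmn : m ≤ n) :
    ∑ k ∈ range n, (if k < 2 ∨ m ≤ k then 1 else -1 : ℤ) = n + 4 - 2 * m := by
  have hneg : (range n).filter (fun k => ¬ (k < 2 ∨ m ≤ k)) = Ico 2 m := by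
    ext k; simp only [mem_filter, mem_range, mem_Ico]; omega
  have hcard := card_filter_add_card_filter_not (s := range n) (fun k => k < 2 ∨ m ≤ k)
  rw [hneg, Nat.card_Ico, card_range] at hcard
  rw [sum_ite, sum_const, sum_const, hneg, Nat.card_Ico, nsmul_eq_mul, nsmul_eq_mul]
  omega

theorem sum_range_sign_two_runs_eq_zero {n m : ℕ} (hm : 2 ≤ m) (hmn : m ≤ n)
    (h3 : (3 : ℤ) ∣ n + 4 - 2 * m) :
    ∑ k ∈ range n, (if k < 2 ∨ m ≤ k then 1 else -1 : ZMod 3) = 0 := by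
  have hcast : ∑ k ∈ range n, (if k < 2 ∨ m ≤ k then 1 else -1 : ZMod 3) =
      ((∑ k ∈ range n, (if k < 2 ∨ m ≤ k then 1 else -1 : ℤ) : ℤ) : ZMod 3) := by
    push_cast [apply_ite]; rfl
  rwa [hcast, sum_range_sign_two_runs n m hm hmn, ZMod.intCast_zmod_eq_zero_iff_dvd]

theorem exists_isStarEdgeColoringCycle_zmod_three {n : ℕ} (hn : 6 ≤ n) :
    ∃ h : ZMod n → ZMod 3,
      IsStarEdgeColoringCycle n h ∧ h 0 = 0 ∧ h 1 = 1 ∧ h 2 = 2 ∧ h 3 = 1 ∧ h 4 = 0 := by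
  have : NeZero n := ⟨by omega⟩
  -- `m ≡ 2n + 2 (mod 3)` makes the `n - m + 2` up-steps and `m - 2` down-steps cancel mod 3
  set m := 4 + (2 * n + 1) % 3
  set σ : ℕ → ZMod 3 := fun k => if k < 2 ∨ m ≤ k then 1 else -1
  have hsum : ∑ k ∈ range n, σ k = 0 :=
    sum_range_sign_two_runs_eq_zero (by omega) (by omega) (by omega)
  obtain ⟨h, h0, hstep⟩ := ZMod.exists_add_steps_of_sum_eq_zero σ hsum
  have hnat : ∀ k < n, h (k + 1 : ℕ) = h k + σ k := fun k hk => by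
    rw [Nat.cast_succ, hstep, ZMod.val_natCast, Nat.mod_eq_of_lt hk]
  have hσ_up : ∀ k < 2, σ k = 1 := fun k hk => if_pos (.inl hk)
  have hσ_down : ∀ k, 2 ≤ k → k < 4 → σ k = -1 := fun k hk2 hk4 => if_neg (by omega)
  have h1 : h 1 = 1 := by simpa [h0, hσ_up] using hnat 0 (by omega)
  have h2 : h 2 = 2 := by simpa [h1, hσ_up, one_add_one_eq_two] using hnat 1 (by omega)
  have h3 : h 3 = 1 := by
    simpa [h2, hσ_down, show (2 : ZMod 3) + -1 = 1 by decide] using hnat 2 (by omega)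
  have h4 : h 4 = 0 := by simpa [h3, hσ_down] using hnat 3 (by omega)
  exact ⟨h, isStarEdgeColoringCycle_of_signs h _ hstep
    (noSingletonRun_two_runs (by omega) (by omega)), h0, h1, h2, h3, h4⟩

theorem injective_vecCons_three {α : Type*} {a b c : α} (hab : a ≠ b) (hac : a ≠ c)
    (hbc : b ≠ c) : Injective ![a, b, c] := by
  simp only [Matrix.vecCons, Fin.cons_injective_iff]
  simp [hab, hac, hbc, Injective, eq_iff_true_of_subsingleton]

theorem stmt_2 {α : Type*} (n : ℕ) (hn : 6 ≤ n)
    (a b c : α) (hab : a ≠ b) (hac : a ≠ c) (hbc : b ≠ c) :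
    ∃ g : ZMod n → α, (∀ i, g i ∈ ({a, b, c} : Set α)) ∧
      IsStarEdgeColoringCycle n g ∧ g 0 = a ∧ g 1 = b ∧ g 2 = c ∧ g 3 = b ∧ g 4 = a := by
  obtain ⟨h, hstar, h0, h1, h2, h3, h4⟩ := exists_isStarEdgeColoringCycle_zmod_three hn
  -- `ZMod 3` is `Fin 3` by definition
  let e : ZMod 3 → α := ![a, b, c]
  refine ⟨e ∘ h, fun i => ?_, hstar.comp (injective_vecCons_three hab hac hbc), ?_⟩
  · show e (h i) ∈ _
    generalize h i = x
    fin_cases x <;> simp [e]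
  · simp only [comp_apply, h0, h1, h2, h3, h4]
    exact ⟨rfl, rfl, rfl, rfl, rfl⟩
end

section
/- Let n > 4 and let P = x_0, x_1, …, x_n be a path. Let f be a partial edge coloring, using a set of three colors, that colors exactly the edges x_0x_1, x_1x_2 and all edges x_ix_{i+1} for 4 ≤ i ≤ n−1, such that f(x_0x_1) ≠ f(x_1x_2) and the restriction of f to the subpath x_4, x_5, …, x_n is a 3-star edge coloring of that subpath. Then f can be extended to a 3-star edge coloring of P with the same three colors if and only if at least one of the following holds: (i) n = 5; (ii) f(x_4x_5) ∈ {f(x_0x_1), f(x_1x_2)}; (iii) n ≥ 6 and f(x_5x_6) ≠ f(x_0x_1). -/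
/-- A 3-star edge coloring of a path with `m` edges `e_0, e_1, …, e_{m-1}` (edge `e_i`
joins `x_i` and `x_{i+1}` and receives color `g i`): the coloring is proper and no
subpath with four edges is bicolored (for a proper coloring this means no four
consecutive edges are colored `a b a b`). -/
def IsStarEdgeColoringPath {α : Type*} (m : ℕ) (g : ℕ → α) : Prop :=
  (∀ i, i + 1 < m → g i ≠ g (i + 1)) ∧
    ∀ i, i + 3 < m → ¬ (g i = g (i + 2) ∧ g (i + 1) = g (i + 3))

lemma ext_of {α : Type*} (n : ℕ) (hn : 4 < n) (f : ℕ → α) (u v : α)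
    (hf01 : f 0 ≠ f 1)
    (hu2 : f 1 ≠ u) (huv : u ≠ v) (hv : v ≠ f 4)
    (S0 : ¬(f 0 = u ∧ f 1 = v)) (S1 : ¬(f 1 = v ∧ u = f 4))
    (S2 : 5 < n → ¬(u = f 4 ∧ v = f 5)) (S3 : 6 < n → ¬(v = f 5 ∧ f 4 = f 6))
    (hsub : IsStarEdgeColoringPath (n - 4) (fun i => f (i + 4))) :
    ∃ g : ℕ → α, g 2 = u ∧ g 3 = v ∧ (∀ i, i ≠ 2 → i ≠ 3 → g i = f i) ∧
      IsStarEdgeColoringPath n g := by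
  refine ⟨fun i => if i = 2 then u else if i = 3 then v else f i, by simp, by simp,
    ?_, ?_, ?_⟩
  · intro i h2 h3; simp [h2, h3]
  · intro i hi
    match i with
    | 0 => simpa using hf01
    | 1 => simpa using hu2
    | 2 => simpa using huv
    | 3 => simpa using hv
    | (j+4) => simpa using hsub.1 j (by omega)
  · intro i hi
    match i with
    | 0 => simpa using S0
    | 1 => simpa using S1
    | 2 => simpa using S2 (by omega)
    | 3 => simpa using S3 (by omega)
    | (j+4) => simpa using hsub.2 j (by omega)

lemma tri {α : Type*} {a b c x y z w : α} (hab : a ≠ b) (hac : a ≠ c) (hbc : b ≠ c)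
    (hx : x ∈ ({a, b, c} : Set α)) (hy : y ∈ ({a, b, c} : Set α))
    (hz : z ∈ ({a, b, c} : Set α)) (hw : w ∈ ({a, b, c} : Set α))
    (hxy : x ≠ y) (hxz : x ≠ z) (hyz : y ≠ z) : w = x ∨ w = y ∨ w = z := by
  simp only [Set.mem_insert_iff, Set.mem_singleton_iff] at hx hy hz hw
  rcases hx with rfl | rfl | rfl <;> rcases hy with rfl | rfl | rfl <;>
    rcases hz with rfl | rfl | rfl <;> tauto

lemma third {α : Type*} {a b c x y : α} (hab : a ≠ b) (hac : a ≠ c) (hbc : b ≠ c)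
    (hx : x ∈ ({a, b, c} : Set α)) (hy : y ∈ ({a, b, c} : Set α)) (hxy : x ≠ y) :
    ∃ z ∈ ({a, b, c} : Set α), x ≠ z ∧ y ≠ z := by
  simp only [Set.mem_insert_iff, Set.mem_singleton_iff] at hx hy ⊢
  rcases hx with rfl | rfl | rfl <;> rcases hy with rfl | rfl | rfl <;>
    [skip; exact ⟨c, by tauto⟩; exact ⟨b, by tauto⟩;
     exact ⟨c, by tauto⟩; skip; exact ⟨a, by tauto⟩;
     exact ⟨b, by tauto⟩; exact ⟨a, by tauto⟩; skip] <;> exact absurd rfl hxy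

lemma build {α : Type*} (n : ℕ) (hn : 4 < n) (a b c : α) (f : ℕ → α)
    (hf0 : f 0 ∈ ({a, b, c} : Set α)) (hf1 : f 1 ∈ ({a, b, c} : Set α))
    (hfrest : ∀ i, 4 ≤ i → i < n → f i ∈ ({a, b, c} : Set α))
    (hf01 : f 0 ≠ f 1) (u v : α)
    (hum : u ∈ ({a, b, c} : Set α)) (hvm : v ∈ ({a, b, c} : Set α))
    (hu2 : f 1 ≠ u) (huv : u ≠ v) (hv : v ≠ f 4)
    (S0 : ¬(f 0 = u ∧ f 1 = v)) (S1 : ¬(f 1 = v ∧ u = f 4))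
    (S2 : 5 < n → ¬(u = f 4 ∧ v = f 5)) (S3 : 6 < n → ¬(v = f 5 ∧ f 4 = f 6))
    (hsub : IsStarEdgeColoringPath (n - 4) (fun i => f (i + 4))) :
    ∃ g : ℕ → α, (∀ i, i < n → g i ∈ ({a, b, c} : Set α)) ∧
        IsStarEdgeColoringPath n g ∧
        g 0 = f 0 ∧ g 1 = f 1 ∧ ∀ i, 4 ≤ i → i < n → g i = f i := by
  obtain ⟨g, hg2, hg3, hgo, hstar⟩ :=
    ext_of n hn f u v hf01 hu2 huv hv S0 S1 S2 S3 hsub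
  refine ⟨g, ?_, hstar, hgo 0 (by omega) (by omega), hgo 1 (by omega) (by omega),
    fun i h4 hi => hgo i (by omega) (by omega)⟩
  intro i hi
  by_cases h2 : i = 2
  · subst h2; rw [hg2]; exact hum
  by_cases h3 : i = 3
  · subst h3; rw [hg3]; exact hvm
  rw [hgo i h2 h3]
  match i with
  | 0 => exact hf0
  | 1 => exact hf1
  | 2 => exact absurd rfl h2
  | 3 => exact absurd rfl h3
  | (j+4) => exact hfrest _ (by omega) hi

theorem stmt_4 {α : Type*} (n : ℕ) (hn : 4 < n)
    (a b c : α) (hab : a ≠ b) (hac : a ≠ c) (hbc : b ≠ c)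
    (f : ℕ → α)
    (hf0 : f 0 ∈ ({a, b, c} : Set α)) (hf1 : f 1 ∈ ({a, b, c} : Set α))
    (hfrest : ∀ i, 4 ≤ i → i < n → f i ∈ ({a, b, c} : Set α))
    (hf01 : f 0 ≠ f 1)
    (hsub : IsStarEdgeColoringPath (n - 4) (fun i => f (i + 4))) :
    (∃ g : ℕ → α, (∀ i, i < n → g i ∈ ({a, b, c} : Set α)) ∧
        IsStarEdgeColoringPath n g ∧
        g 0 = f 0 ∧ g 1 = f 1 ∧ ∀ i, 4 ≤ i → i < n → g i = f i) ↔
      (n = 5 ∨ f 4 ∈ ({f 0, f 1} : Set α) ∨ (6 ≤ n ∧ f 5 ≠ f 0)) := by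
  have hf4m : f 4 ∈ ({a, b, c} : Set α) := hfrest 4 le_rfl hn
  constructor
  · -- forward direction
    rintro ⟨g, hmem, ⟨hp, hs⟩, hg0, hg1, hgf⟩
    by_contra hcon
    push_neg at hcon
    simp only [Set.mem_insert_iff, Set.mem_singleton_iff, not_or] at hcon
    obtain ⟨hn5, ⟨h40, h41⟩, h56⟩ := hcon
    have hn6 : 6 ≤ n := by omega
    have hf5 : f 5 = f 0 := h56 hn6
    have hg4 : g 4 = f 4 := hgf 4 le_rfl (by omega)
    have hg5 : g 5 = f 5 := hgf 5 (by omega) (by omega)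
    -- g 2 is f 0 or f 4
    have hg2m : g 2 ∈ ({a, b, c} : Set α) := hmem 2 (by omega)
    have hg3m : g 3 ∈ ({a, b, c} : Set α) := hmem 3 (by omega)
    have h12 : g 1 ≠ g 2 := hp 1 (by omega)
    have h23 : g 2 ≠ g 3 := hp 2 (by omega)
    have h34 : g 3 ≠ g 4 := hp 3 (by omega)
    have htri2 : g 2 = f 0 ∨ g 2 = f 1 ∨ g 2 = f 4 :=
      tri hab hac hbc hf0 hf1 hf4m hg2m hf01 (Ne.symm h40) (Ne.symm h41)
    have htri3 : g 3 = f 0 ∨ g 3 = f 1 ∨ g 3 = f 4 :=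
      tri hab hac hbc hf0 hf1 hf4m hg3m hf01 (Ne.symm h40) (Ne.symm h41)
    rw [hg1] at h12
    rw [hg4] at h34
    rcases htri2 with h2 | h2 | h2
    · -- g 2 = f 0 : star condition at 0 forces g 3 ≠ f 1, so g 3 = f 0 = g 2
      have hS0 : ¬(g 0 = g 2 ∧ g 1 = g 3) := hs 0 (by omega)
      rw [hg0, hg1, h2] at hS0
      have h3f1 : g 3 ≠ f 1 := fun h => hS0 ⟨rfl, h.symm⟩
      rcases htri3 with h3 | h3 | h3
      · exact h23 (h2.trans h3.symm)
      · exact h3f1 h3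
      · exact h34 h3
    · exact h12 h2.symm
    · -- g 2 = f 4 : star condition at 1 forces g 3 ≠ f 1, so g 3 = f 0 = f 5
      have hS1 : ¬(g 1 = g 3 ∧ g 2 = g 4) := hs 1 (by omega)
      rw [hg1, hg4, h2] at hS1
      have h3f1 : g 3 ≠ f 1 := fun h => hS1 ⟨h.symm, rfl⟩
      have h3 : g 3 = f 0 := by
        rcases htri3 with h3 | h3 | h3
        · exact h3
        · exact absurd h3 h3f1
        · exact absurd h3 h34
      have hS2 : ¬(g 2 = g 4 ∧ g 3 = g 5) := hs 2 (by omega)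
      rw [hg4, hg5, h2, h3, hf5] at hS2
      exact hS2 ⟨rfl, rfl⟩
  · -- backward direction
    intro hcond
    obtain ⟨z, hzm, hz0, hz1⟩ := third hab hac hbc hf0 hf1 hf01
    have h45 : 5 < n → f 4 ≠ f 5 := fun h => hsub.1 0 (by omega)
    have htri4 : f 4 = f 0 ∨ f 4 = f 1 ∨ f 4 = z :=
      tri hab hac hbc hf0 hf1 hzm hf4m hf01 hz0 hz1
    rcases htri4 with h4 | h4 | h4
    · -- f 4 = f 0
      by_cases hb : 5 < n ∧ f 5 = z
      · -- use (z, f 1)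
        refine build n hn a b c f hf0 hf1 hfrest hf01 z (f 1) hzm hf1
          hz1 (Ne.symm hz1) (by rw [h4]; exact Ne.symm hf01)
          (fun ⟨h, _⟩ => hz0 h) (fun ⟨_, h⟩ => hz0 (h4 ▸ h).symm)
          (fun _ ⟨h, _⟩ => hz0 (h4 ▸ h).symm)
          (fun _ ⟨h, _⟩ => hz1 (hb.2 ▸ h)) hsub
      · -- use (f 0, z)
        have h5z : 5 < n → f 5 ≠ z := fun h hz => hb ⟨h, hz⟩
        refine build n hn a b c f hf0 hf1 hfrest hf01 (f 0) z hf0 hzm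
          (Ne.symm hf01) hz0 (by rw [h4]; exact Ne.symm hz0)
          (fun ⟨_, h⟩ => hz1 h) (fun ⟨h, _⟩ => hz1 h)
          (fun h ⟨_, h2⟩ => h5z h h2.symm)
          (fun h ⟨h1, _⟩ => h5z (by omega) h1.symm) hsub
    · -- f 4 = f 1
      by_cases hb : 5 < n ∧ f 5 = z
      · -- use (z, f 0)
        refine build n hn a b c f hf0 hf1 hfrest hf01 z (f 0) hzm hf0
          hz1 (Ne.symm hz0) (by rw [h4]; exact hf01)
          (fun ⟨h, _⟩ => hz0 h) (fun ⟨h, _⟩ => hf01 h.symm)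
          (fun _ ⟨h, _⟩ => hz1 (h4 ▸ h).symm)
          (fun _ ⟨h, _⟩ => hz0 (hb.2 ▸ h)) hsub
      · -- use (f 0, z)
        have h5z : 5 < n → f 5 ≠ z := fun h hz => hb ⟨h, hz⟩
        refine build n hn a b c f hf0 hf1 hfrest hf01 (f 0) z hf0 hzm
          (Ne.symm hf01) hz0 (by rw [h4]; exact Ne.symm hz1)
          (fun ⟨_, h⟩ => hz1 h) (fun ⟨h, _⟩ => hz1 h)
          (fun _ ⟨h, _⟩ => hf01 (h4 ▸ h))
          (fun h ⟨h1, _⟩ => h5z (by omega) h1.symm) hsub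
    · -- f 4 = z : the condition forces n = 5 or f 5 ≠ f 0
      have hA : 5 < n → f 5 ≠ f 0 := by
        intro h5
        rcases hcond with h | h | h
        · omega
        · simp only [Set.mem_insert_iff, Set.mem_singleton_iff] at h
          rcases h with h | h
          · exact absurd (h4 ▸ h) (Ne.symm hz0)
          · exact absurd (h4 ▸ h) (Ne.symm hz1)
        · exact h.2
      -- use (z, f 0)
      refine build n hn a b c f hf0 hf1 hfrest hf01 z (f 0) hzm hf0
        hz1 (Ne.symm hz0) (by rw [h4]; exact hz0)
        (fun ⟨h, _⟩ => hz0 h) (fun ⟨h, _⟩ => hf01 h.symm)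
        (fun h ⟨_, h2⟩ => hA h h2.symm)
        (fun h ⟨h1, _⟩ => hA (by omega) h1.symm) hsub
end

section
/- Let n ≥ 3 with n ≠ 5 and let C = x_0, x_1, …, x_{n−1}, x_0 be a cycle of length n. Let f be a partial edge coloring of exactly three edges of C, using colors from a fixed set of three colors, such that f is proper (any two adjacent colored edges receive different colors) and at least two of the three colored edges are adjacent. Then f can be extended to a 3-star edge coloring of C using the same three colors. -/
/-!
Colour the edge `x_i x_{i+1}` by `V i = ∑_{j<i} s j ∈ ℤ/3`, where the steps `s j ∈ {1, 2}` are
`n`-periodic with period sum `0`. Nonzero steps make `V` proper, and a bicoloured path with four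
edges is exactly an isolated step (a pattern `1 2 1` or `2 1 2`). So taking `s = 2` on one block
of `L` consecutive residues, `2 ≤ L ≤ n - 2` and `n + L ≡ 0 (mod 3)` (or `L = 0` when `n = 3`),
gives a 3-star colouring; such an `L` exists unless `n = 5`. Sliding the block changes the
number of `2`-steps before a given position `m`, hence `V m`, through a full residue system mod 3,
except when `m = 2` or `m = n - 1`, where properness already excludes one value. After rotating
the cycle and renaming the colours, the precolouring reads `V 0 = 0`, `V 1 = 1`, `V m = t`.
-/

open Finset Function

section StarColoring

variable {α β : Type*} {n : ℕ} {g : ZMod n → α}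

theorem IsStarEdgeColoringCycle.comp_injective (hg : IsStarEdgeColoringCycle n g) {ρ : α → β}
    (hρ : Injective ρ) : IsStarEdgeColoringCycle n (ρ ∘ g) :=
  ⟨fun i h => hg.1 i (hρ h), fun i h => hg.2 i ⟨hρ h.1, hρ h.2⟩⟩

theorem IsStarEdgeColoringCycle.comp_sub (hg : IsStarEdgeColoringCycle n g) (p : ZMod n) :
    IsStarEdgeColoringCycle n (fun i => g (i - p)) :=
  ⟨fun i => by simpa only [add_sub_right_comm] using hg.1 (i - p),
    fun i => by simpa only [add_sub_right_comm] using hg.2 (i - p)⟩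

theorem isStarEdgeColoringCycle_of_periodic [NeZero n] {u : ℕ → α} (hu : Periodic u n)
    (hproper : ∀ k, u k ≠ u (k + 1)) (hstar : ∀ k, ¬(u k = u (k + 2) ∧ u (k + 1) = u (k + 3))) :
    IsStarEdgeColoringCycle n (fun i : ZMod n => u i.val) := by
  have shift (i : ZMod n) (d : ℕ) : u (i + d).val = u (i.val + d) := by
    rw [ZMod.val_add, ZMod.val_natCast, Nat.add_mod_mod, hu.map_mod_nat]
  have h1 := fun i => shift i 1
  have h2 := fun i => shift i 2
  have h3 := fun i => shift i 3
  push_cast at h1 h2 h3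
  exact ⟨fun i => by simpa only [h1] using hproper i.val,
    fun i => by simpa only [h1, h2, h3] using hstar i.val⟩

theorem isStarEdgeColoringCycle_sum_range {G : Type*} [AddCommGroup G] [NeZero n] {s : ℕ → G}
    (hs : Periodic s n) (hsum : ∑ j ∈ range n, s j = 0) (hne : ∀ k, s k ≠ 0)
    (hstar : ∀ k, ¬(s k + s (k + 1) = 0 ∧ s (k + 1) + s (k + 2) = 0)) :
    IsStarEdgeColoringCycle n (fun i : ZMod n => ∑ j ∈ range i.val, s j) := by
  have sum_two (k : ℕ) : ∑ j ∈ range (k + 2), s j = ∑ j ∈ range k, s j + (s k + s (k + 1)) := by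
    rw [sum_range_succ, sum_range_succ, add_assoc]
  refine isStarEdgeColoringCycle_of_periodic (u := fun k => ∑ j ∈ range k, s j)
    (fun k => ?_) (fun k h => hne k ?_) (fun k ⟨h, h'⟩ => hstar k ⟨?_, ?_⟩)
  · dsimp only
    rw [add_comm, sum_range_add, hsum, zero_add]
    exact sum_congr rfl fun j _ => by rw [add_comm, hs]
  · rwa [sum_range_succ, left_eq_add] at h
  · rwa [sum_two, left_eq_add] at h
  · rwa [show k + 3 = k + 1 + 2 from rfl, sum_two, left_eq_add] at h'

end StarColoring

def blockStep (n o L k : ℕ) : ZMod 3 := if k % n ∈ Ico o (o + L) then 2 else 1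

section BlockStep

variable {n o L : ℕ}

theorem blockStep_periodic : Periodic (blockStep n o L) n := fun k => by
  simp only [blockStep, Nat.add_mod_right]

theorem blockStep_ne_zero (k : ℕ) : blockStep n o L k ≠ 0 := by
  unfold blockStep; split_ifs <;> decide

theorem blockStep_add_eq_zero_iff (k k' : ℕ) :
    blockStep n o L k + blockStep n o L k' = 0 ↔
      ¬(k % n ∈ Ico o (o + L) ↔ k' % n ∈ Ico o (o + L)) := by
  unfold blockStep
  by_cases h : k % n ∈ Ico o (o + L) <;> by_cases h' : k' % n ∈ Ico o (o + L) <;>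
    simp [h, h'] <;> decide

theorem sum_range_blockStep {m : ℕ} (hm : m ≤ n) :
    ∑ j ∈ range m, blockStep n o L j = ((m + (min m (o + L) - o) : ℕ) : ZMod 3) := by
  have step (j : ℕ) (hj : j ∈ range m) :
      blockStep n o L j = 1 + if j ∈ Ico o (o + L) then 1 else 0 := by
    rw [blockStep, Nat.mod_eq_of_lt ((mem_range.mp hj).trans_le hm)]
    split_ifs <;> decide
  rw [sum_congr rfl step, sum_add_distrib, sum_boole, filter_mem_eq_inter, range_eq_Ico,
    Ico_inter_Ico, Nat.card_Ico]
  simp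

theorem blockStep_not_alternating (hoL : o + L ≤ n) (hL : L = 0 ∨ 2 ≤ L ∧ L + 2 ≤ n) (k : ℕ) :
    ¬(blockStep n o L k + blockStep n o L (k + 1) = 0 ∧
      blockStep n o L (k + 1) + blockStep n o L (k + 2) = 0) := by
  simp only [blockStep_add_eq_zero_iff, mem_Ico]
  rcases hL with rfl | hL
  · omega
  have := Nat.mod_lt k (by omega : 0 < n)
  rw [Nat.add_mod_eq_ite, Nat.add_mod_eq_ite (n := 2), Nat.mod_eq_of_lt (by omega : 1 < n),
    Nat.mod_eq_of_lt (by omega : 2 < n)]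
  split_ifs <;> omega

end BlockStep

-- For `n = 5` we would need `L ≡ 1 (mod 3)` with `2 ≤ L ≤ 3`.
theorem exists_block_length {n : ℕ} (hn : 3 ≤ n) (hn5 : n ≠ 5) :
    ∃ L, 3 ∣ n + L ∧ (L = 0 ∧ n = 3 ∨ 2 ≤ L ∧ L ≤ 4 ∧ L + 2 ≤ n) := by
  by_cases h3 : n = 3
  · exact ⟨0, by omega⟩
  · exact ⟨2 + (2 * n + 1) % 3, by omega⟩

theorem exists_block {n m t : ℕ} (hn : 3 ≤ n) (hn5 : n ≠ 5) (hm : 2 ≤ m) (hmn : m < n)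
    (ht : t < 3) (ht2 : m = 2 → t ≠ 1) (ht3 : m = n - 1 → t ≠ 0) :
    ∃ o L, 1 ≤ o ∧ o + L ≤ n ∧ (L = 0 ∨ 2 ≤ L ∧ L + 2 ≤ n) ∧ 3 ∣ n + L ∧
      (m + (min m (o + L) - o)) % 3 = t := by
  obtain ⟨L, ⟨k, hk⟩, hL⟩ := exists_block_length hn hn5
  -- `c` is the number of `2`-steps before `m`; as `o` varies it takes every value in
  -- `[m + L - n, min L (m - 1)]`.
  obtain ⟨c, hlo, hcL, hcm, hc⟩ : ∃ c, m + L - n ≤ c ∧ c ≤ L ∧ c < m ∧ (m + c) % 3 = t := by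
    by_cases h2 : m = 2
    · exact ⟨(t + 1) % 3, by omega⟩
    by_cases h3 : m = n - 1
    · exact ⟨L - 2 + t, by omega⟩
    · exact ⟨m + L - n + (t + 2 * (m + (m + L - n))) % 3, by omega⟩
  exact ⟨m - c, L, by omega, by omega, by omega, ⟨k, hk⟩, by omega⟩

theorem exists_isStarEdgeColoringCycle_zmod3 {n : ℕ} (hn : 3 ≤ n) (hn5 : n ≠ 5) {d : ZMod n}
    (hd0 : d ≠ 0) (hd1 : d ≠ 1) {t : ZMod 3} (ht2 : d = 2 → t ≠ 1) (ht3 : d = -1 → t ≠ 0) :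
    ∃ V : ZMod n → ZMod 3, IsStarEdgeColoringCycle n V ∧ V 0 = 0 ∧ V 1 = 1 ∧ V d = t := by
  have : NeZero n := ⟨by omega⟩
  have : Fact (1 < n) := ⟨by omega⟩
  obtain ⟨m, hmn, rfl⟩ : ∃ m : ℕ, m < n ∧ (m : ZMod n) = d := ⟨d.val, d.val_lt, d.natCast_zmod_val⟩
  obtain ⟨s, hs, rfl⟩ : ∃ s : ℕ, s < 3 ∧ (s : ZMod 3) = t := ⟨t.val, t.val_lt, t.natCast_zmod_val⟩
  have hm0 : m ≠ 0 := by rintro rfl; exact hd0 Nat.cast_zero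
  have hm1 : m ≠ 1 := by rintro rfl; exact hd1 Nat.cast_one
  obtain ⟨o, L, ho, hoL, hL, hL3, hmt⟩ := exists_block hn hn5 (by omega) hmn hs
    (fun h h' => ht2 (by simp [h]) (by simp [h']))
    (fun h h' => ht3 (by rw [h, Nat.cast_sub (by omega), ZMod.natCast_self, Nat.cast_one, zero_sub])
      (by simp [h']))
  have hsum : ∑ j ∈ range n, blockStep n o L j = 0 := by
    rw [sum_range_blockStep le_rfl, min_eq_right hoL, Nat.add_sub_cancel_left,
      ZMod.natCast_eq_zero_iff]
    exact hL3
  refine ⟨_, isStarEdgeColoringCycle_sum_range blockStep_periodic hsum blockStep_ne_zero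
    (blockStep_not_alternating hoL hL), by simp, ?_, ?_⟩
  · rw [ZMod.val_one, sum_range_one, blockStep, if_neg (by rw [Nat.zero_mod, mem_Ico]; omega)]
  · simp only [ZMod.val_natCast, Nat.mod_eq_of_lt hmn, sum_range_blockStep hmn.le]
    rw [ZMod.natCast_eq_natCast_iff', hmt, Nat.mod_eq_of_lt hs]

theorem exists_third_color {α : Type*} {a b c x y : α} (hab : a ≠ b) (hac : a ≠ c) (hbc : b ≠ c)
    (hx : x ∈ ({a, b, c} : Set α)) (hy : y ∈ ({a, b, c} : Set α)) (hxy : x ≠ y) :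
    ∃ z, z ≠ x ∧ z ≠ y ∧ ({x, y, z} : Set α) = {a, b, c} := by
  simp only [Set.mem_insert_iff, Set.mem_singleton_iff] at hx hy
  rcases hx with rfl | rfl | rfl <;> rcases hy with rfl | rfl | rfl <;>
    first
    | exact (hxy rfl).elim
    | exact ⟨c, hac.symm, hbc.symm, rfl⟩
    | exact ⟨c, hbc.symm, hac.symm, Set.insert_comm _ _ _⟩
    | exact ⟨b, hab.symm, hbc, by ext; simp; tauto⟩
    | exact ⟨b, hbc, hab.symm, by ext; simp; tauto⟩
    | exact ⟨a, hab, hac, by ext; simp; tauto⟩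
    | exact ⟨a, hac, hab, by ext; simp; tauto⟩

theorem exists_injective_zmod3 {α : Type*} {a b c x y : α} (hab : a ≠ b) (hac : a ≠ c)
    (hbc : b ≠ c) (hx : x ∈ ({a, b, c} : Set α)) (hy : y ∈ ({a, b, c} : Set α)) (hxy : x ≠ y) :
    ∃ ρ : ZMod 3 → α, Injective ρ ∧ Set.range ρ = {a, b, c} ∧ ρ 0 = x ∧ ρ 1 = y := by
  obtain ⟨z, hzx, hzy, hxyz⟩ := exists_third_color hab hac hbc hx hy hxy
  refine ⟨![x, y, z], ?_, ?_, rfl, rfl⟩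
  · intro i j h
    fin_cases i <;> fin_cases j <;> first | rfl | simp_all [eq_comm]
  · rw [← hxyz]
    show Set.range (![x, y, z] : Fin 3 → α) = _
    rw [Matrix.range_cons, Matrix.range_cons, Matrix.range_cons, Matrix.range_empty,
      Set.union_empty, Set.singleton_union, Set.singleton_union]

theorem Finset.exists_eq_insert_insert_of_card_eq_three {β : Type*} [DecidableEq β]
    {S : Finset β} (hS : S.card = 3) {x y : β} (hx : x ∈ S) (hy : y ∈ S) (hxy : x ≠ y) :
    ∃ z, z ≠ x ∧ z ≠ y ∧ S = {x, y, z} := by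
  have hsub : {x, y} ⊆ S := by simp [insert_subset_iff, hx, hy]
  obtain ⟨z, hz⟩ : ∃ z, S \ {x, y} = {z} := by
    rw [← card_eq_one, card_sdiff_of_subset hsub, hS, card_pair hxy]
  have hzS : z ∈ S \ {x, y} := hz ▸ mem_singleton_self z
  simp only [mem_sdiff, mem_insert, mem_singleton, not_or] at hzS
  refine ⟨z, hzS.2.1, hzS.2.2, ?_⟩
  rw [← union_sdiff_of_subset hsub, hz, insert_union, singleton_union]

theorem stmt_5 {α : Type*} (n : ℕ) (hn : 3 ≤ n) (hn5 : n ≠ 5)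
    (a b c : α) (hab : a ≠ b) (hac : a ≠ c) (hbc : b ≠ c)
    (S : Finset (ZMod n)) (hScard : S.card = 3) (f : ZMod n → α)
    (hcolors : ∀ i ∈ S, f i ∈ ({a, b, c} : Set α))
    (hproper : ∀ i ∈ S, i + 1 ∈ S → f i ≠ f (i + 1))
    (hadj : ∃ i ∈ S, i + 1 ∈ S) :
    ∃ g : ZMod n → α, (∀ i, g i ∈ ({a, b, c} : Set α)) ∧
      IsStarEdgeColoringCycle n g ∧ ∀ i ∈ S, g i = f i := by
  classical
  have : Fact (1 < n) := ⟨by omega⟩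
  obtain ⟨p, hp, hp1⟩ := hadj
  obtain ⟨q, hqp, hqp1, rfl⟩ :=
    exists_eq_insert_insert_of_card_eq_three hScard hp hp1 (left_ne_add.mpr one_ne_zero)
  obtain ⟨ρ, hρ, hrange, hρ0, hρ1⟩ := exists_injective_zmod3 hab hac hbc
    (hcolors p hp) (hcolors (p + 1) hp1) (hproper p hp hp1)
  obtain ⟨t, ht⟩ : f q ∈ Set.range ρ := hrange ▸ hcolors q (by simp)
  have ht2 : q - p = 2 → t ≠ 1 := by
    intro h h1
    have hq : p + 1 + 1 = q := by rw [sub_eq_iff_eq_add'.mp h, add_assoc, one_add_one_eq_two]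
    exact hproper (p + 1) hp1 (by simp [hq]) (by rw [hq, ← ht, h1, hρ1])
  have ht3 : q - p = -1 → t ≠ 0 := by
    intro h h0
    have hq : q + 1 = p := by rw [sub_eq_iff_eq_add'.mp h, neg_add_cancel_right]
    exact hproper q (by simp) (by simp [hq]) (by rw [hq, ← ht, h0, hρ0])
  obtain ⟨V, hV, hV0, hV1, hVq⟩ := exists_isStarEdgeColoringCycle_zmod3 hn hn5
    (sub_ne_zero.mpr hqp) (fun h => hqp1 (sub_eq_iff_eq_add'.mp h)) ht2 ht3
  refine ⟨fun i => ρ (V (i - p)), fun i => hrange ▸ Set.mem_range_self _,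
    (hV.comp_sub p).comp_injective hρ, ?_⟩
  simp only [mem_insert, mem_singleton]
  rintro i (rfl | rfl | rfl)
  · rw [sub_self, hV0, hρ0]
  · rw [add_sub_cancel_left, hV1, hρ1]
  · rw [hVq, ht]
end

section
/- Let n and k be positive integers with n ≥ 2k and gcd(n, k) = 2. If n ≡ 0 (mod 6), then the generalized Petersen graph GP(n, k) admits a 5-star edge coloring, i.e., χ'_s(GP(n, k)) ≤ 5. -/
/-- The generalized Petersen graph `GP(n, k)`: vertices are `Sum.inl i = u_i` (outer) and
`Sum.inr i = v_i` (inner) for `i : ZMod n`, with edges `u_i u_{i+1}`, `v_i v_{i+k}` and the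
spokes `u_i v_i`, indices taken modulo `n`. -/
def genPetersen (n k : ℕ) : SimpleGraph (ZMod n ⊕ ZMod n) :=
  SimpleGraph.fromRel (fun x y =>
    match x, y with
    | Sum.inl i, Sum.inl j => j = i + 1
    | Sum.inr i, Sum.inr j => j = i + (k : ZMod n)
    | Sum.inl i, Sum.inr j => i = j
    | Sum.inr _, Sum.inl _ => False)

/-- `c` is a star edge coloring of `G`: it is a proper edge coloring (distinct edges of `G`
sharing a vertex receive different colors) and no path with four edges and no cycle with
four edges is bicolored (i.e. colored with exactly two colors). -/
def IsStarEdgeColoring {V α : Type*} [DecidableEq α] (G : SimpleGraph V)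
    (c : Sym2 V → α) : Prop :=
  (∀ e₁ ∈ G.edgeSet, ∀ e₂ ∈ G.edgeSet, e₁ ≠ e₂ → (∃ v, v ∈ e₁ ∧ v ∈ e₂) → c e₁ ≠ c e₂) ∧
  (∀ (u v : V) (p : G.Walk u v), p.IsPath → p.length = 4 →
      (p.edges.map c).toFinset.card ≠ 2) ∧
  (∀ (u : V) (p : G.Walk u u), p.IsCycle → p.length = 4 →
      (p.edges.map c).toFinset.card ≠ 2)

/-!
Since `6 ∣ n` and `gcd(n, k) = 2`, `k ≡ ±2 (mod 6)`, so reducing indices mod 6 is a graph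
homomorphism `GP(n, k) → GP(6, 2)` that is injective on every neighbourhood. Such a map sends
paths and cycles to non-backtracking walks (`w i ≠ w (i + 2)`), so it pulls back any edge
coloring of `GP(6, 2)` with no bicolored non-backtracking walk of length 4 to a star edge
coloring of `GP(n, k)`. A 5-coloring of `GP(6, 2)` with this stronger property is checked by
exhaustion.
-/

namespace SimpleGraph

variable {V W α : Type*} {G : SimpleGraph V} {H : SimpleGraph W}

def Hom.LocallyInjective (f : G →g H) : Prop :=
  ∀ ⦃x a b : V⦄, G.Adj x a → G.Adj x b → f a = f b → a = b

def IsNonbacktrackingStarColoring [DecidableEq α] (G : SimpleGraph V) (c : Sym2 V → α) : Prop :=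
  (∀ ⦃x a b : V⦄, G.Adj x a → G.Adj x b → a ≠ b → c s(x, a) ≠ c s(x, b)) ∧
  ∀ ⦃w₀ w₁ w₂ w₃ w₄ : V⦄, G.Adj w₀ w₁ → G.Adj w₁ w₂ → G.Adj w₂ w₃ → G.Adj w₃ w₄ →
    w₀ ≠ w₂ → w₁ ≠ w₃ → w₂ ≠ w₄ →
    [c s(w₀, w₁), c s(w₁, w₂), c s(w₂, w₃), c s(w₃, w₄)].toFinset.card ≠ 2

theorem Walk.exists_eq_cons_four {u v : V} (p : G.Walk u v) (hp : p.length = 4) :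
    ∃ (w₁ w₂ w₃ : V) (h₁ : G.Adj u w₁) (h₂ : G.Adj w₁ w₂) (h₃ : G.Adj w₂ w₃) (h₄ : G.Adj w₃ v),
      p = .cons h₁ (.cons h₂ (.cons h₃ (.cons h₄ .nil))) := by
  match p, hp with
  | .cons h₁ (.cons h₂ (.cons h₃ (.cons h₄ .nil))), _ => exact ⟨_, _, _, h₁, h₂, h₃, h₄, rfl⟩

namespace IsNonbacktrackingStarColoring

variable [DecidableEq α] {c : Sym2 W → α}

theorem comap (hc : H.IsNonbacktrackingStarColoring c) (f : G →g H) (hf : f.LocallyInjective) :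
    G.IsNonbacktrackingStarColoring (c ∘ Sym2.map f) := by
  refine ⟨fun x a b ha hb hab => ?_, fun w₀ w₁ w₂ w₃ w₄ h₁ h₂ h₃ h₄ h₀₂ h₁₃ h₂₄ => ?_⟩
  · simpa only [Function.comp, Sym2.map_mk] using
      hc.1 (f.map_adj ha) (f.map_adj hb) (fun h => hab (hf ha hb h))
  · simpa only [Function.comp, Sym2.map_mk] using
      hc.2 (f.map_adj h₁) (f.map_adj h₂) (f.map_adj h₃) (f.map_adj h₄)
        (fun h => h₀₂ (hf h₁.symm h₂ h)) (fun h => h₁₃ (hf h₂.symm h₃ h))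
        (fun h => h₂₄ (hf h₃.symm h₄ h))

theorem isStarEdgeColoring {c : Sym2 V → α} (hc : G.IsNonbacktrackingStarColoring c) :
    IsStarEdgeColoring G c := by
  refine ⟨fun e₁ he₁ e₂ he₂ hne ⟨x, hx₁, hx₂⟩ => ?_, fun u v p hp hl => ?_, fun u p hp hl => ?_⟩
  · obtain ⟨a, rfl⟩ : ∃ a, s(x, a) = e₁ := ⟨_, Sym2.other_spec hx₁⟩
    obtain ⟨b, rfl⟩ : ∃ b, s(x, b) = e₂ := ⟨_, Sym2.other_spec hx₂⟩
    exact hc.1 he₁ he₂ (fun h => hne (h ▸ rfl))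
  · obtain ⟨w₁, w₂, w₃, h₁, h₂, h₃, h₄, rfl⟩ := p.exists_eq_cons_four hl
    have hs := hp.support_nodup
    simp only [Walk.support_cons, Walk.support_nil, List.nodup_cons, List.mem_cons,
      List.not_mem_nil, or_false, not_or] at hs
    simpa using hc.2 h₁ h₂ h₃ h₄ hs.1.2.1 hs.2.1.2.1 hs.2.2.1.2
  · obtain ⟨w₁, w₂, w₃, h₁, h₂, h₃, h₄, rfl⟩ := p.exists_eq_cons_four hl
    have hs := hp.support_nodup
    simp only [Walk.support_cons, Walk.support_nil, List.tail_cons, List.nodup_cons,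
      List.mem_cons, List.not_mem_nil, or_false, not_or] at hs
    simpa using hc.2 h₁ h₂ h₃ h₄ (Ne.symm hs.2.1.2) hs.1.2.1 hs.2.1.2

end IsNonbacktrackingStarColoring

end SimpleGraph

section GeneralizedPetersen

variable {n k : ℕ}

@[simp] theorem genPetersen_adj_inl_inl {i j : ZMod n} :
    (genPetersen n k).Adj (.inl i) (.inl j) ↔ i ≠ j ∧ (j = i + 1 ∨ i = j + 1) := by
  simp [genPetersen]

@[simp] theorem genPetersen_adj_inr_inr {i j : ZMod n} :
    (genPetersen n k).Adj (.inr i) (.inr j) ↔ i ≠ j ∧ (j = i + k ∨ i = j + k) := by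
  simp [genPetersen]

@[simp] theorem genPetersen_adj_inl_inr {i j : ZMod n} :
    (genPetersen n k).Adj (.inl i) (.inr j) ↔ i = j := by
  simp [genPetersen]

@[simp] theorem genPetersen_adj_inr_inl {i j : ZMod n} :
    (genPetersen n k).Adj (.inr i) (.inl j) ↔ i = j := by
  simp [genPetersen, eq_comm]

theorem genPetersen_eq_of_natCast_eq_or_eq_neg {k' : ℕ}
    (h : (k' : ZMod n) = k ∨ (k' : ZMod n) = -k) : genPetersen n k' = genPetersen n k := by
  rcases h with h | h
  · simp only [genPetersen, h]
  ext (i | i) (j | j)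
  all_goals simp only [genPetersen_adj_inl_inl, genPetersen_adj_inr_inr, genPetersen_adj_inl_inr,
    genPetersen_adj_inr_inl, h]
  refine and_congr_right fun _ => ⟨?_, ?_⟩ <;> rintro (rfl | rfl) <;> simp

def genPetersenNbr (n k : ℕ) : ZMod n ⊕ ZMod n → Fin 3 → ZMod n ⊕ ZMod n
  | .inl i, 0 => .inl (i + 1)
  | .inl i, 1 => .inl (i - 1)
  | .inl i, _ => .inr i
  | .inr i, 0 => .inr (i + k)
  | .inr i, 1 => .inr (i - k)
  | .inr i, _ => .inl i

theorem exists_eq_genPetersenNbr_of_adj {x y : ZMod n ⊕ ZMod n} (h : (genPetersen n k).Adj x y) :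
    ∃ d, y = genPetersenNbr n k x d := by
  rcases x with i | i <;> rcases y with j | j <;> simp only [genPetersen_adj_inl_inl,
    genPetersen_adj_inr_inr, genPetersen_adj_inl_inr, genPetersen_adj_inr_inl] at h
  · rcases h.2 with rfl | rfl
    · exact ⟨0, rfl⟩
    · exact ⟨1, by simp [genPetersenNbr]⟩
  · exact ⟨2, h ▸ rfl⟩
  · exact ⟨2, h ▸ rfl⟩
  · rcases h.2 with rfl | rfl
    · exact ⟨0, rfl⟩
    · exact ⟨1, by simp [genPetersenNbr]⟩

theorem genPetersen_adj_genPetersenNbr (h₁ : (1 : ZMod n) ≠ 0) (hk : (k : ZMod n) ≠ 0)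
    (x : ZMod n ⊕ ZMod n) (d : Fin 3) : (genPetersen n k).Adj x (genPetersenNbr n k x d) := by
  rcases x with i | i <;> fin_cases d <;> simp [genPetersenNbr, h₁, hk, eq_sub_iff_add_eq]

theorem genPetersenNbr_injective (h₂ : (2 : ZMod n) ≠ 0) (h₂k : 2 * (k : ZMod n) ≠ 0)
    (x : ZMod n ⊕ ZMod n) : Function.Injective (genPetersenNbr n k x) := by
  have hne : ∀ a b : ZMod n, 2 * b ≠ 0 → a + b ≠ a - b := fun a b hb h =>
    hb (by linear_combination h)
  intro d d' h
  rcases x with i | i <;> fin_cases d <;> fin_cases d' <;>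
    simp_all [genPetersenNbr, hne i 1, (hne i 1 (by simpa using h₂)).symm, hne i k h₂k,
      (hne i k h₂k).symm]

end GeneralizedPetersen

section Cover

variable {m n : ℕ} (k : ℕ)

def genPetersenReduce (hmn : m ∣ n) : ZMod n ⊕ ZMod n → ZMod m ⊕ ZMod m :=
  Sum.map (ZMod.castHom hmn (ZMod m)) (ZMod.castHom hmn (ZMod m))

theorem genPetersenReduce_genPetersenNbr (hmn : m ∣ n) (x : ZMod n ⊕ ZMod n) (d : Fin 3) :
    genPetersenReduce hmn (genPetersenNbr n k x d) =
      genPetersenNbr m k (genPetersenReduce hmn x) d := by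
  rcases x with i | i <;> fin_cases d <;>
    simp [genPetersenReduce, genPetersenNbr, -ZMod.castHom_apply]

theorem exists_locallyInjective_hom_genPetersen (hmn : m ∣ n) (h₂ : (2 : ZMod m) ≠ 0)
    (h₂k : 2 * (k : ZMod m) ≠ 0) :
    ∃ f : genPetersen n k →g genPetersen m k, f.LocallyInjective := by
  have h₁ : (1 : ZMod m) ≠ 0 := fun h => h₂ (by linear_combination 2 * h)
  have hk : (k : ZMod m) ≠ 0 := fun h => h₂k (by rw [h, mul_zero])
  refine ⟨⟨genPetersenReduce hmn, fun {x y} h => ?_⟩, fun x a b ha hb hab => ?_⟩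
  · obtain ⟨d, rfl⟩ := exists_eq_genPetersenNbr_of_adj h
    rw [genPetersenReduce_genPetersenNbr]
    exact genPetersen_adj_genPetersenNbr h₁ hk _ d
  · obtain ⟨d, rfl⟩ := exists_eq_genPetersenNbr_of_adj ha
    obtain ⟨d', rfl⟩ := exists_eq_genPetersenNbr_of_adj hb
    simp only [RelHom.coeFn_mk, genPetersenReduce_genPetersenNbr] at hab
    rw [genPetersenNbr_injective h₂ h₂k _ hab]

end Cover

-- Colors of `u_i u_{i+1}`, `v_i v_{i+2}` and `u_i v_i`; non-edges get the junk color `0`.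
def gp62EdgeColor : ZMod 6 ⊕ ZMod 6 → ZMod 6 ⊕ ZMod 6 → Fin 5
  | .inl i, .inl j =>
    if j = i + 1 then ![1, 0, 3, 2, 4, 0] i else if i = j + 1 then ![1, 0, 3, 2, 4, 0] j else 0
  | .inr i, .inr j =>
    if j = i + 2 then ![4, 4, 1, 1, 3, 3] i else if i = j + 2 then ![4, 4, 1, 1, 3, 3] j else 0
  | .inl i, .inr _ | .inr _, .inl i => ![2, 2, 2, 0, 0, 2] i

def gp62Coloring : Sym2 (ZMod 6 ⊕ ZMod 6) → Fin 5 := Sym2.lift ⟨gp62EdgeColor, by decide⟩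

theorem gp62Coloring_isNonbacktrackingStarColoring :
    (genPetersen 6 2).IsNonbacktrackingStarColoring gp62Coloring := by
  have proper : ∀ x (d d' : Fin 3), d ≠ d' →
      gp62Coloring s(x, genPetersenNbr 6 2 x d) ≠ gp62Coloring s(x, genPetersenNbr 6 2 x d') := by
    decide
  refine ⟨fun x a b ha hb hab => ?_, fun w₀ w₁ w₂ w₃ w₄ h₁ h₂ h₃ h₄ => ?_⟩
  · obtain ⟨d, rfl⟩ := exists_eq_genPetersenNbr_of_adj ha
    obtain ⟨d', rfl⟩ := exists_eq_genPetersenNbr_of_adj hb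
    exact proper x d d' (fun h => hab (h ▸ rfl))
  · obtain ⟨d₁, rfl⟩ := exists_eq_genPetersenNbr_of_adj h₁
    obtain ⟨d₂, rfl⟩ := exists_eq_genPetersenNbr_of_adj h₂
    obtain ⟨d₃, rfl⟩ := exists_eq_genPetersenNbr_of_adj h₃
    obtain ⟨d₄, rfl⟩ := exists_eq_genPetersenNbr_of_adj h₄
    clear h₁ h₂ h₃ h₄
    revert w₀ d₁ d₂ d₃ d₄
    decide

theorem natCast_zmod_six_eq_two_or_neg_two_of_gcd_eq_two {n k : ℕ} (hd : Nat.gcd n k = 2)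
    (h6 : 6 ∣ n) :
    (k : ZMod 6) = 2 ∨ (k : ZMod 6) = -2 := by
  have h2k : 2 ∣ k := hd ▸ Nat.gcd_dvd_right n k
  have h3k : ¬ 3 ∣ k := fun h3k =>
    absurd (hd ▸ Nat.dvd_gcd (dvd_trans (by norm_num) h6) h3k) (by norm_num)
  rw [← ZMod.natCast_mod]
  have : k % 6 = 2 ∨ k % 6 = 4 := by omega
  rcases this with h | h <;> rw [h] <;> decide

theorem stmt_10_general (n k : ℕ) (hd : Nat.gcd n k = 2)
    (h6 : n % 6 = 0) :
    ∃ c : Sym2 (ZMod n ⊕ ZMod n) → Fin 5, IsStarEdgeColoring (genPetersen n k) c := by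
  have h6n : 6 ∣ n := Nat.dvd_of_mod_eq_zero h6
  have hk := natCast_zmod_six_eq_two_or_neg_two_of_gcd_eq_two hd h6n
  obtain ⟨f, hf⟩ := exists_locallyInjective_hom_genPetersen k h6n (by decide)
    (by rcases hk with h | h <;> rw [h] <;> decide)
  have hgp : genPetersen 6 k = genPetersen 6 2 :=
    genPetersen_eq_of_natCast_eq_or_eq_neg (by simpa using hk)
  have hc := gp62Coloring_isNonbacktrackingStarColoring
  rw [← hgp] at hc
  exact ⟨_, (hc.comap f hf).isStarEdgeColoring⟩

theorem stmt_10 (n k : ℕ) (hk : 0 < k) (hn : 2 * k ≤ n) (hd : Nat.gcd n k = 2)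
    (h6 : n % 6 = 0) :
    ∃ c : Sym2 (ZMod n ⊕ ZMod n) → Fin 5, IsStarEdgeColoring (genPetersen n k) c :=
  stmt_10_general n k hd h6
end

section
/- Every cycle of length n ≥ 3 with n ≠ 5 admits a 3-star edge coloring; that is, for the cycle graph C_n with n ≥ 3 and n ≠ 5 one has χ'_s(C_n) ≤ 3. -/
theorem ZMod.val_add_one_eq_ite {n : ℕ} [NeZero n] (i : ZMod n) :
    (i + 1).val = if i.val + 1 = n then 0 else i.val + 1 := by
  have hi := i.val_lt
  rw [ZMod.val_add, ZMod.val_one_eq_one_mod]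
  rcases Nat.lt_or_ge 1 n with hn | hn
  · rw [Nat.mod_eq_of_lt hn]
    split_ifs with h
    · rw [h, Nat.mod_self]
    · exact Nat.mod_eq_of_lt (by omega)
  · obtain rfl : n = 1 := by have := NeZero.pos n; omega
    rw [Nat.mod_one, if_pos (by omega)]

/-- States `0, 1, 2` are the positions in a block `012`, states `3, 4, 5, 6` those in a
block `0102`; after the last position of a block (`2` or `6`) either block may start. -/
def BlockStep (s t : Fin 7) : Prop :=
  (s.val = 2 ∨ s.val = 6) ∧ (t.val = 0 ∨ t.val = 3) ∨
    s.val ≠ 2 ∧ s.val ≠ 6 ∧ t.val = s.val + 1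

instance : DecidableRel BlockStep := fun _ _ => by unfold BlockStep; infer_instance

def blockColor : Fin 7 → Fin 3 := ![0, 1, 2, 0, 1, 0, 2]

theorem blockColor_window {s₀ s₁ s₂ s₃ : Fin 7} (h₀ : BlockStep s₀ s₁) (h₁ : BlockStep s₁ s₂)
    (h₂ : BlockStep s₂ s₃) :
    blockColor s₀ ≠ blockColor s₁ ∧
      ¬(blockColor s₀ = blockColor s₂ ∧ blockColor s₁ = blockColor s₃) := by
  revert s₀ s₁ s₂ s₃
  decide

theorem isStarEdgeColoringCycle_blockColor_comp {n : ℕ} {q : ZMod n → Fin 7}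
    (hq : ∀ i, BlockStep (q i) (q (i + 1))) :
    IsStarEdgeColoringCycle n (blockColor ∘ q) := by
  have window i := blockColor_window (hq i) (hq (i + 1)) (hq (i + 1 + 1))
  simp only [add_assoc, one_add_one_eq_two, two_add_one_eq_three] at window
  exact ⟨fun i => (window i).1, fun i => (window i).2⟩

def blockState (a m : ℕ) : Fin 7 :=
  if m < 3 * a then ⟨m % 3, by omega⟩ else ⟨3 + (m - 3 * a) % 4, by omega⟩

theorem blockStep_blockState {n a b : ℕ} [NeZero n] (h : 3 * a + 4 * b = n) (i : ZMod n) :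
    BlockStep (blockState a i.val) (blockState a (i + 1).val) := by
  have hi := i.val_lt
  rw [ZMod.val_add_one_eq_ite]
  unfold BlockStep blockState
  split_ifs <;> grind

theorem exists_three_mul_add_four_mul_eq {n : ℕ} (hn : 3 ≤ n) (hn5 : n ≠ 5) :
    ∃ a b, 3 * a + 4 * b = n := by
  obtain h | h | h : n % 3 = 0 ∨ n % 3 = 1 ∨ n % 3 = 2 := by omega
  · exact ⟨n / 3, 0, by omega⟩
  · exact ⟨(n - 4) / 3, 1, by omega⟩
  · exact ⟨(n - 8) / 3, 2, by omega⟩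

theorem stmt_14 (n : ℕ) (hn : 3 ≤ n) (hn5 : n ≠ 5) :
    ∃ g : ZMod n → Fin 3, IsStarEdgeColoringCycle n g := by
  obtain ⟨a, b, h⟩ := exists_three_mul_add_four_mul_eq hn hn5
  have : NeZero n := ⟨by omega⟩
  exact ⟨_, isStarEdgeColoringCycle_blockColor_comp (blockStep_blockState h)⟩
end
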